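/- Let G be a finite graph with a regular rooted tree decomposition (T,bag), let s,t ∈ V(G) and S ⊆ V(G), and set Ŝ = S ∪ {s,t}. Let z be a strict ancestor of y in T and assume Ŝ ∩ (comp(z) \ cone(y)) = ∅. Let J be the graph with vertex set D(y) ∪ adh(z) whose edge set is the union of profile(y) and the edge set of torso(z,y). Then for every pair of distinct vertices a,b ∈ V(J): there is an a–b path in G[cone(z)] that avoids all vertices of S if and only if there is an a–b path in J that avoids all vertices of S. -/

import Mathlib

/-- A finite rooted tree, encoded by its parent function. -/
structure RTree (ι : Type*) where
  root : ι
  parent : ι → ι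
  parent_root : parent root = root
  reaches_root : ∀ x : ι, ∃ n : ℕ, parent^[n] x = root

namespace RTree

variable {ι : Type*} (T : RTree ι)

/-- `T.Anc x y` means `x` is an ancestor of `y` (every node is its own ancestor). -/
def Anc (x y : ι) : Prop := ∃ n : ℕ, T.parent^[n] y = x

/-- `T.IsChild y x` means `y` is a child of `x`. -/
def IsChild (y x : ι) : Prop := y ≠ T.root ∧ T.parent y = x

/-- The underlying undirected graph of the rooted tree. -/
def treeGraph : SimpleGraph ι where
  Adj x y := x ≠ y ∧ (T.IsChild x y ∨ T.IsChild y x)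
  symm := ⟨fun x y h => ⟨h.1.symm, h.2.symm⟩⟩
  loopless := ⟨fun x h => h.1 rfl⟩

end RTree

/-- Two vertices are connected by a walk all of whose vertices lie in `U`. -/
def ConnIn {V : Type*} (G : SimpleGraph V) (U : Set V) (a b : V) : Prop :=
  ∃ p : G.Walk a b, ∀ w ∈ p.support, w ∈ U

theorem ConnIn.symm {V : Type*} {G : SimpleGraph V} {U : Set V} {a b : V}
    (h : ConnIn G U a b) : ConnIn G U b a := by
  obtain ⟨p, hp⟩ := h
  refine ⟨p.reverse, fun w hw => hp w ?_⟩
  rwa [SimpleGraph.Walk.support_reverse, List.mem_reverse] at hw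

/-- `X` is `(q,k)`-unbreakable in the induced subgraph `G[U]`: for every separation `(A,B)`
of `G[U]` of order at most `k`, one of the two sides contains at most `q` vertices of `X`. -/
def UnbreakableIn {V : Type*} (G : SimpleGraph V) (U X : Set V) (q k : ℕ) : Prop :=
  ∀ A B : Set V, A ⊆ U → B ⊆ U → A ∪ B = U →
    (∀ a ∈ A \ B, ∀ b ∈ B \ A, ¬ G.Adj a b) →
    (A ∩ B).ncard ≤ k →
    (A ∩ X).ncard ≤ q ∨ (B ∩ X).ncard ≤ q

/-- A rooted tree decomposition of the graph `G`, with nodes indexed by `ι`. -/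
structure TreeDecomp {V : Type*} (G : SimpleGraph V) (ι : Type*) extends RTree ι where
  bag : ι → Set V
  /-- (T1) for every vertex, the set of nodes whose bag contains it
  is a nonempty subtree of the tree. -/
  bag_subtree : ∀ u : V, ((toRTree.treeGraph).induce {x : ι | u ∈ bag x}).Connected
  /-- (T2) every edge is contained in some bag. -/
  bag_edge : ∀ u v : V, G.Adj u v → ∃ x : ι, u ∈ bag x ∧ v ∈ bag x

namespace TreeDecomp

variable {V ι : Type*} {G : SimpleGraph V} (D : TreeDecomp G ι)

/-- The adhesion of a node: intersection of its bag with the bag of its parent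
(empty at the root). -/
def adh (x : ι) : Set V :=
  {v : V | x ≠ D.root ∧ v ∈ D.bag (D.parent x) ∧ v ∈ D.bag x}

/-- The margin of a node. -/
def mrg (x : ι) : Set V := D.bag x \ D.adh x

/-- The cone at a node: union of the bags at all its descendants. -/
def cone (x : ι) : Set V := {v : V | ∃ y : ι, D.toRTree.Anc x y ∧ v ∈ D.bag y}

/-- The component at a node. -/
def comp (x : ι) : Set V := D.cone x \ D.adh x

/-- A tree decomposition is regular if every non-root node has nonempty margin,
connected component, and every adhesion vertex has a neighbour in the component. -/
def Regular : Prop :=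
  ∀ x : ι, x ≠ D.root →
    (D.mrg x).Nonempty ∧
    (G.induce (D.comp x)).Connected ∧
    ∀ u ∈ D.adh x, ∃ w ∈ D.comp x, G.Adj u w

end TreeDecomp

/-- Adjacency in the torso of `X` in the induced subgraph `G[U]`:
`a, b ∈ X` are adjacent iff `G[U]` contains an `a`–`b` path whose internal vertices
all avoid `X`. -/
def TorsoAdj {V : Type*} (G : SimpleGraph V) (U X : Set V) (a b : V) : Prop :=
  a ≠ b ∧ a ∈ X ∧ b ∈ X ∧
    ∃ p : G.Walk a b, (∀ w ∈ p.support, w ∈ U) ∧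
      (∀ w ∈ p.support, w ≠ a → w ≠ b → w ∉ X)

namespace TreeDecomp

variable {V ι : Type*} {G : SimpleGraph V} (D : TreeDecomp G ι)

/-- `D(x) = adh(x) ∪ ({s,t} ∩ cone(x))`. -/
def Dset (s t : V) (x : ι) : Set V := D.adh x ∪ ({s, t} ∩ D.cone x)

end TreeDecomp

/-!
The adhesion `adh(y)` separates `comp(y)` from the rest of the graph, and `adh(y) ⊆ D(y)` while
`adh(z) ∩ cone(y) ⊆ adh(y)`. Cut an `S`-avoiding walk in `G[cone(z)]` at its vertices in
`X = D(y) ∪ adh(z)`. A piece that enters `comp(y)` cannot leave `cone(y)` before it reaches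
`adh(y) ⊆ X`, so it stays in `cone(y)` and gives a `profile(y)` edge; a piece that avoids `comp(y)`
is a `torso(z,y)` edge. Conversely, a `torso(z,y)` edge is realised by a path whose interior lies
in `comp(z) \ cone(y)`, which `S` avoids by hypothesis.
-/

open SimpleGraph

namespace RTree

variable {ι : Type*} (T : RTree ι)

theorem anc_refl (x : ι) : T.Anc x x := ⟨0, rfl⟩

theorem anc_trans {x y z : ι} (hxy : T.Anc x y) (hyz : T.Anc y z) : T.Anc x z := by
  obtain ⟨n, rfl⟩ := hxy
  obtain ⟨m, rfl⟩ := hyz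
  exact ⟨n + m, Function.iterate_add_apply _ _ _ _⟩

theorem eq_root_of_isPeriodicPt {x : ι} {n : ℕ} (hn : 0 < n)
    (hx : Function.IsPeriodicPt T.parent n x) : x = T.root := by
  obtain ⟨N, hN⟩ := T.reaches_root x
  calc x = T.parent^[n * N] x := (hx.mul_const N).eq.symm
    _ = T.parent^[n * N - N] (T.parent^[N] x) := by
      rw [← Function.iterate_add_apply, Nat.sub_add_cancel (Nat.le_mul_of_pos_left N hn)]
    _ = T.root := by rw [hN, Function.iterate_fixed T.parent_root]

theorem anc_antisymm {x y : ι} (hxy : T.Anc x y) (hyx : T.Anc y x) : x = y := by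
  obtain ⟨n, rfl⟩ := hxy
  obtain ⟨m, hm⟩ := hyx
  rcases n.eq_zero_or_pos with rfl | hn
  · rfl
  · have hy : y = T.root :=
      T.eq_root_of_isPeriodicPt (n := m + n) (by omega) (by
        rw [Function.IsPeriodicPt, Function.IsFixedPt, Function.iterate_add_apply, hm])
    rw [hy, Function.iterate_fixed T.parent_root]

theorem eq_of_treeGraph_adj_of_anc_of_not_anc {y c e : ι} (hce : T.treeGraph.Adj c e)
    (hc : T.Anc y c) (he : ¬ T.Anc y e) : c = y ∧ e = T.parent y ∧ y ≠ T.root := by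
  obtain ⟨n, hn⟩ := hc
  rcases hce.2 with ⟨hc_root, rfl⟩ | ⟨-, rfl⟩
  · cases n with
    | zero => exact ⟨hn, hn ▸ rfl, hn ▸ hc_root⟩
    | succ n => exact absurd ⟨n, by rwa [← Function.iterate_succ_apply]⟩ he
  · exact absurd ⟨n + 1, by rwa [Function.iterate_succ_apply]⟩ he

end RTree

namespace ConnIn

variable {V : Type*} {G : SimpleGraph V} {U W : Set V} {a b c : V}

theorem refl (ha : a ∈ U) : ConnIn G U a a :=
  ⟨.nil, by simpa using ha⟩

theorem of_adj (h : G.Adj a b) (ha : a ∈ U) (hb : b ∈ U) : ConnIn G U a b :=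
  ⟨.cons h .nil, by simp [ha, hb]⟩

theorem right_mem (h : ConnIn G U a b) : b ∈ U :=
  h.choose_spec b h.choose.end_mem_support

theorem trans (hab : ConnIn G U a b) (hbc : ConnIn G U b c) : ConnIn G U a c := by
  obtain ⟨p, hp⟩ := hab
  obtain ⟨q, hq⟩ := hbc
  refine ⟨p.append q, fun w hw => ?_⟩
  rw [Walk.mem_support_append_iff] at hw
  exact hw.elim (hp w) (hq w)

theorem mono (h : ConnIn G U a b) (hUW : U ⊆ W) : ConnIn G W a b :=
  let ⟨p, hp⟩ := h
  ⟨p, fun w hw => hUW (hp w hw)⟩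

theorem of_forall_adj {J : SimpleGraph V}
    (hJ : ∀ c e, c ∈ W → e ∈ W → J.Adj c e → ConnIn G U c e) (ha : a ∈ U)
    (h : ConnIn J W a b) : ConnIn G U a b := by
  obtain ⟨p, hp⟩ := h
  induction p with
  | nil => exact .refl ha
  | @cons c e d hce p ih =>
    simp only [Walk.support_cons, List.mem_cons, forall_eq_or_imp] at hp
    have hce' := hJ c e hp.1 (hp.2 e p.start_mem_support) hce
    exact hce'.trans (ih hce'.right_mem hp.2)

theorem of_torsoAdj_imp {J : SimpleGraph V} {X : Set V}
    (hJ : ∀ u v, TorsoAdj G U X u v → J.Adj u v) (ha : a ∈ X) (hb : b ∈ X)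
    (h : ConnIn G U a b) : ConnIn J U a b := by
  have hpiece : ∀ {u v}, u ∈ X → v ∈ X → ∀ q : G.Walk u v, (∀ w ∈ q.support, w ∈ U) →
      (∀ w ∈ q.support, w ≠ u → w ≠ v → w ∉ X) → ConnIn J U u v := by
    intro u v hu hv q hqU hqX
    by_cases huv : u = v
    · subst huv
      exact .refl (hqU u q.start_mem_support)
    · exact .of_adj (hJ u v ⟨huv, hu, hv, q, hqU, hqX⟩) (hqU u q.start_mem_support)
        (hqU v q.end_mem_support)
  -- `q` is the piece from the last vertex `u ∈ X` seen so far to the current vertex `c`.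
  suffices key : ∀ {c d} (p : G.Walk c d), d ∈ X → (∀ w ∈ p.support, w ∈ U) → ∀ u ∈ X,
      ∀ q : G.Walk u c, (∀ w ∈ q.support, w ∈ U) →
        (∀ w ∈ q.support, w ≠ u → w ≠ c → w ∉ X) → ConnIn J U u d by
    obtain ⟨p, hp⟩ := h
    exact key p hb hp a ha .nil (by simpa using hp a p.start_mem_support) (by simp)
  intro c d p
  induction p with
  | nil => exact fun hd _ u hu q hqU hqX => hpiece hu hd q hqU hqX
  | @cons c e d hce p ih =>
    intro hd hp u hu q hqU hqX
    simp only [Walk.support_cons, List.mem_cons, forall_eq_or_imp] at hp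
    by_cases hc : c ∈ X
    · refine (hpiece hu hc q hqU hqX).trans (ih hd hp.2 c hc (.cons hce .nil) ?_ (by simp))
      simp [hp.1, hp.2 e p.start_mem_support]
    · refine ih hd hp.2 u hu (q.concat hce) ?_ ?_
      · simp only [Walk.support_concat, List.mem_append, List.mem_singleton]
        rintro w (hw | rfl)
        exacts [hqU w hw, hp.2 _ p.start_mem_support]
      · simp only [Walk.support_concat, List.mem_append, List.mem_singleton]
        rintro w (hw | rfl) hwu hwe
        · by_cases hwc : w = c
          · exact hwc ▸ hc
          · exact hqX w hw hwu hwc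
        · exact absurd rfl hwe

end ConnIn

namespace TreeDecomp

variable {V ι : Type*} {G : SimpleGraph V} (D : TreeDecomp G ι)

theorem adh_subset_bag (x : ι) : D.adh x ⊆ D.bag x := fun _ hv => hv.2.2

theorem bag_subset_cone (x : ι) : D.bag x ⊆ D.cone x :=
  fun _ hv => ⟨x, D.anc_refl x, hv⟩

theorem adh_subset_cone (x : ι) : D.adh x ⊆ D.cone x :=
  (D.adh_subset_bag x).trans (D.bag_subset_cone x)

theorem cone_mono {x y : ι} (h : D.Anc x y) : D.cone y ⊆ D.cone x :=
  fun _ ⟨w, hw, hv⟩ => ⟨w, D.anc_trans h hw, hv⟩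

theorem mem_adh_of_mem_cone_of_notMem_comp {v : V} {x : ι} (hv : v ∈ D.cone x)
    (hx : v ∉ D.comp x) : v ∈ D.adh x := by
  by_contra h
  exact hx ⟨hv, h⟩

/-- By (T1) the bags containing `v` form a subtree, and a subtree meeting both the descendants
of `y` and a non-descendant contains the edge from `y` to its parent. -/
theorem mem_adh_of_mem_cone_of_mem_bag {v : V} {x y : ι} (hv : v ∈ D.cone y)
    (hx : v ∈ D.bag x) (hyx : ¬ D.Anc y x) : v ∈ D.adh y := by
  obtain ⟨x', hyx', hx'⟩ := hv
  set H := D.treeGraph.induce {n | v ∈ D.bag n}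
  suffices key : ∀ (c d : {n | v ∈ D.bag n}), H.Walk c d → D.Anc y c → ¬ D.Anc y d →
      v ∈ D.adh y from
    ((D.bag_subtree v).preconnected ⟨x', hx'⟩ ⟨x, hx⟩).elim fun p => key _ _ p hyx' hyx
  intro c d p
  induction p with
  | nil => exact fun hc hd => absurd hc hd
  | @cons c e d hce p ih =>
    intro hc hd
    by_cases he : D.Anc y e
    · exact ih he hd
    · obtain ⟨rfl, he_eq, hy⟩ := D.eq_of_treeGraph_adj_of_anc_of_not_anc hce hc he
      exact ⟨hy, he_eq ▸ e.2, c.2⟩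

theorem mem_cone_of_adj {y : ι} {w w' : V} (hw : w ∈ D.comp y) (h : G.Adj w w') :
    w' ∈ D.cone y := by
  obtain ⟨x, hwx, hw'x⟩ := D.bag_edge w w' h
  by_cases hx : D.Anc y x
  · exact ⟨x, hx, hw'x⟩
  · exact absurd (D.mem_adh_of_mem_cone_of_mem_bag hw.1 hwx hx) hw.2

theorem support_subset_cone_of_isPath {y : ι} {c d : V} (r : G.Walk c d) (hr : r.IsPath)
    (hadh : ∀ x ∈ r.support.tail, x ∈ D.adh y → x = d)
    (hmeet : ∃ w ∈ r.support, w ∈ D.comp y) : ∀ w ∈ r.support, w ∈ D.cone y := by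
  induction r with
  | nil =>
    obtain ⟨w, hw, hwy⟩ := hmeet
    simp only [Walk.support_nil, List.mem_singleton] at hw ⊢
    exact fun _ h => h ▸ hw ▸ hwy.1
  | @cons c e d hce r ih =>
    rw [Walk.cons_isPath_iff] at hr
    simp only [Walk.support_cons, List.tail_cons, List.mem_cons,
      exists_eq_or_imp, forall_eq_or_imp] at hadh hmeet ⊢
    have ih' := fun hmeet' => ih hr.1 (fun x hx => hadh x (List.mem_of_mem_tail hx)) hmeet'
    by_cases he : e ∈ D.comp y
    · exact ⟨D.mem_cone_of_adj he hce.symm, ih' ⟨e, r.start_mem_support, he⟩⟩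
    · have hec : e ∈ D.cone y := hmeet.elim (fun hc => D.mem_cone_of_adj hc hce)
        (fun h => ih' h e r.start_mem_support)
      have hed : e = d :=
        hadh e r.start_mem_support (D.mem_adh_of_mem_cone_of_notMem_comp hec he)
      subst hed
      rw [Walk.nil_iff_support_eq.mp (Walk.isPath_iff_nil.mp hr.1)]
        at hmeet ⊢
      simp only [List.mem_singleton, exists_eq_left, forall_eq, or_iff_left he] at hmeet ⊢
      exact ⟨hmeet.1, hec⟩

theorem dset_subset_cone (s t : V) (y : ι) : D.Dset s t y ⊆ D.cone y :=
  Set.union_subset (D.adh_subset_cone y) Set.inter_subset_right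

theorem mem_dset_of_mem_cone {s t v : V} {y z : ι} (hyz : ¬ D.Anc y z)
    (hv : v ∈ D.Dset s t y ∪ D.adh z) (hvy : v ∈ D.cone y) : v ∈ D.Dset s t y :=
  hv.elim id fun hvz => .inl (D.mem_adh_of_mem_cone_of_mem_bag hvy (D.adh_subset_bag z hvz) hyz)

theorem mem_adh_union_of_notMem_comp {s t v : V} {y z : ι}
    (hv : v ∈ D.Dset s t y ∪ D.adh z) (hvy : v ∉ D.comp y) : v ∈ D.adh z ∪ D.adh y := by
  rcases hv with (hv | ⟨-, hv⟩) | hv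
  · exact .inr hv
  · exact .inr (D.mem_adh_of_mem_cone_of_notMem_comp hv hvy)
  · exact .inl hv

variable {s t : V} {S : Set V} {z y : ι} {J : SimpleGraph V}

theorem adj_of_torsoAdj (hyz : ¬ D.Anc y z)
    (hJ : ∀ a b : V, J.Adj a b ↔ a ≠ b ∧
        ((a ∈ D.Dset s t y ∧ b ∈ D.Dset s t y ∧ ConnIn G (D.cone y \ S) a b) ∨
          TorsoAdj G (D.cone z \ D.comp y) (D.adh z ∪ D.adh y) a b))
    {u v : V} (huv : TorsoAdj G (D.cone z \ S) (D.Dset s t y ∪ D.adh z) u v) : J.Adj u v := by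
  classical
  obtain ⟨hne, hu, hv, q, hqU, hqX⟩ := huv
  have hp := q.bypass_isPath
  have hpU : ∀ w ∈ q.bypass.support, w ∈ D.cone z \ S :=
    fun w hw => hqU w (q.support_bypass_subset_support hw)
  have hpX : ∀ w ∈ q.bypass.support, w ≠ u → w ≠ v → w ∉ D.Dset s t y ∪ D.adh z :=
    fun w hw => hqX w (q.support_bypass_subset_support hw)
  have hadhX : D.adh z ∪ D.adh y ⊆ D.Dset s t y ∪ D.adh z :=
    Set.union_subset Set.subset_union_right (fun _ hx => .inl (.inl hx))
  refine (hJ u v).2 ⟨hne, ?_⟩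
  by_cases hmeet : ∃ w ∈ q.bypass.support, w ∈ D.comp y
  · left
    have hu_tail : u ∉ q.bypass.support.tail := by
      have := hp.support_nodup
      rw [← Walk.cons_tail_support] at this
      exact (List.nodup_cons.mp this).1
    have hcone := D.support_subset_cone_of_isPath q.bypass hp (fun x hx hxy => by
      by_contra hxv
      have hxu : x ≠ u := fun h => hu_tail (h ▸ hx)
      exact hpX x (List.mem_of_mem_tail hx) hxu hxv (hadhX (.inr hxy))) hmeet
    exact ⟨D.mem_dset_of_mem_cone hyz hu (hcone u q.bypass.start_mem_support),
      D.mem_dset_of_mem_cone hyz hv (hcone v q.bypass.end_mem_support),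
      q.bypass, fun w hw => ⟨hcone w hw, (hpU w hw).2⟩⟩
  · right
    simp only [not_exists, not_and] at hmeet
    exact ⟨hne, D.mem_adh_union_of_notMem_comp hu (hmeet u q.bypass.start_mem_support),
      D.mem_adh_union_of_notMem_comp hv (hmeet v q.bypass.end_mem_support), q.bypass,
      fun w hw => ⟨(hpU w hw).1, hmeet w hw⟩,
      fun w hw hwu hwv hwX => hpX w hw hwu hwv (hadhX hwX)⟩

theorem connIn_of_adj (hzy : D.Anc z y) (hS : Disjoint S (D.comp z \ D.cone y))
    (hJ : ∀ a b : V, J.Adj a b ↔ a ≠ b ∧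
        ((a ∈ D.Dset s t y ∧ b ∈ D.Dset s t y ∧ ConnIn G (D.cone y \ S) a b) ∨
          TorsoAdj G (D.cone z \ D.comp y) (D.adh z ∪ D.adh y) a b))
    {c e : V} (hc : c ∉ S) (he : e ∉ S) (hce : J.Adj c e) : ConnIn G (D.cone z \ S) c e := by
  rcases ((hJ c e).1 hce).2 with ⟨-, -, hprofile⟩ | ⟨-, -, -, q, hqU, hqX⟩
  · exact hprofile.mono (Set.sdiff_subset_sdiff_left (D.cone_mono hzy))
  · refine ⟨q, fun w hw => ⟨(hqU w hw).1, fun hwS => ?_⟩⟩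
    have hwc : w ≠ c := fun h => hc (h ▸ hwS)
    have hwe : w ≠ e := fun h => he (h ▸ hwS)
    have hwX := hqX w hw hwc hwe
    refine Set.disjoint_left.mp hS hwS ⟨⟨(hqU w hw).1, fun h => hwX (.inl h)⟩, fun hwy => ?_⟩
    exact (hqU w hw).2 ⟨hwy, fun h => hwX (.inr h)⟩

end TreeDecomp

theorem stmt7_general {V ι : Type*} {G : SimpleGraph V}
    (D : TreeDecomp G ι)
    (s t : V) (S : Set V)
    (z y : ι) (hanc : D.toRTree.Anc z y) (hzy : z ≠ y)
    (hdisj : Disjoint (S ∪ {s, t}) (D.comp z \ D.cone y))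
    (J : SimpleGraph V)
    (hJ : ∀ a b : V, J.Adj a b ↔ a ≠ b ∧
        ((a ∈ D.Dset s t y ∧ b ∈ D.Dset s t y ∧ ConnIn G (D.cone y \ S) a b) ∨
          TorsoAdj G (D.cone z \ D.comp y) (D.adh z ∪ D.adh y) a b))
    (a b : V) (ha : a ∈ D.Dset s t y ∪ D.adh z) (hb : b ∈ D.Dset s t y ∪ D.adh z) :
    ConnIn G (D.cone z \ S) a b ↔ ConnIn J Sᶜ a b := by
  have hyz : ¬ D.Anc y z := fun h => hzy (D.anc_antisymm hanc h)
  have hX : D.Dset s t y ∪ D.adh z ⊆ D.cone z :=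
    Set.union_subset ((D.dset_subset_cone s t y).trans (D.cone_mono hanc)) (D.adh_subset_cone z)
  constructor
  · intro h
    exact (h.of_torsoAdj_imp (fun u v => D.adj_of_torsoAdj hyz hJ) ha hb).mono
      (Set.sdiff_subset_compl _ _)
  · rintro ⟨p, hp⟩
    exact ConnIn.of_forall_adj (fun c e hc he => D.connIn_of_adj hanc
      (hdisj.mono_left Set.subset_union_left) hJ hc he) ⟨hX ha, hp a p.start_mem_support⟩ ⟨p, hp⟩

/-- Let `z` be a strict ancestor of `y` such that
`Ŝ = S ∪ {s,t}` avoids `comp(z) \ cone(y)`, and let `J` be the graph on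
`D(y) ∪ adh(z)` whose edges are the pairs of `profile(y)` together with the edges of
`torso(z,y)`. Then distinct `a, b ∈ D(y) ∪ adh(z)` are joined by an `S`-avoiding path in
`G[cone(z)]` iff they are joined by an `S`-avoiding path in `J`. -/
theorem stmt7 {V ι : Type*} [Fintype V] [Fintype ι] {G : SimpleGraph V}
    (D : TreeDecomp G ι) (hreg : D.Regular)
    (s t : V) (S : Set V)
    (z y : ι) (hanc : D.toRTree.Anc z y) (hzy : z ≠ y)
    (hdisj : Disjoint (S ∪ {s, t}) (D.comp z \ D.cone y))
    (J : SimpleGraph V)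
    (hJ : ∀ a b : V, J.Adj a b ↔ a ≠ b ∧
        ((a ∈ D.Dset s t y ∧ b ∈ D.Dset s t y ∧ ConnIn G (D.cone y \ S) a b) ∨
          TorsoAdj G (D.cone z \ D.comp y) (D.adh z ∪ D.adh y) a b))
    (a b : V) (ha : a ∈ D.Dset s t y ∪ D.adh z) (hb : b ∈ D.Dset s t y ∪ D.adh z)
    (hab : a ≠ b) :
    ConnIn G (D.cone z \ S) a b ↔ ConnIn J Sᶜ a b :=
  stmt7_general D s t S z y hanc hzy hdisj J hJ a b ha hb
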